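/- arXiv:2008.09231 — 2 statements merged into one kernel-verified Lean document; each statement's English description precedes it below -/
import Mathlib

section
/- Disintegration for Markov kernels: let f, f1, f2 be input-preserving Markov kernels with f1 ⊙ f2 defined (range(f1) = dom(f2)). If f = f1 ⊙ f2, then π_{range(f1)} f = f1. Conversely, if f is an input-preserving Markov kernel, f1 is an input-preserving Markov kernel with dom(f1) = dom(f) and range(f1) ⊆ range(f), and π_{range(f1)} f = f1, then there exists an input-preserving Markov kernel g : Mem(range(f1)) → D(Mem(range(f))) with f = f1 ⊙ g. -/
open scoped ENNReal

/-- A memory over a set `S` of variables: an assignment of a value to each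
variable in `S`. -/
def Mem (Val Var : Type) (S : Set Var) : Type := S → Val

/-- Restriction (projection) of a memory to a smaller domain. -/
def restr {Val Var : Type} {S T : Set Var} (h : T ⊆ S) (m : Mem Val Var S) :
    Mem Val Var T :=
  fun t => m ⟨t.1, h t.2⟩

/-- Two memories (over possibly different domains) agree if they coincide on the
intersection of their domains.  For `T ⊆ S`, `Agree m r` says exactly that `r`
is the restriction `m^T`. -/
def Agree {Val Var : Type} {S T : Set Var} (m : Mem Val Var S) (r : Mem Val Var T) : Prop :=
  ∀ (i : Var) (h1 : i ∈ S) (h2 : i ∈ T), m ⟨i, h1⟩ = r ⟨i, h2⟩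
/-- A (sub)distribution as a mass function into `ℝ≥0∞`; `IsDist μ` says the total
mass is `1`, i.e. `μ` is a (finitely supported, as all types involved are finite)
probability distribution. -/
def IsDist {α : Type*} (μ : α → ℝ≥0∞) : Prop := ∑' a, μ a = 1

open Classical in
/-- Marginalization of a mass function on memories over `S` to memories over `T`
(intended for `T ⊆ S`). -/
noncomputable def marg {Val Var : Type} {S : Set Var} (μ : Mem Val Var S → ℝ≥0∞)
    (T : Set Var) : Mem Val Var T → ℝ≥0∞ :=
  fun r => ∑' m : Mem Val Var S, if Agree m r then μ m else 0

open Classical in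
/-- The point mass (Dirac distribution) at a memory. -/
noncomputable def dirac {Val Var : Type} {S : Set Var} (d : Mem Val Var S) :
    Mem Val Var S → ℝ≥0∞ :=
  fun r => if r = d then 1 else 0

/-- A Markov-kernel-shaped map on memories, with explicit domain and range. -/
structure PKernel (Val Var : Type) where
  dom : Set Var
  ran : Set Var
  f : Mem Val Var dom → Mem Val Var ran → ℝ≥0∞

/-- Membership in `M^D`: `K` is a Markov kernel (every output is a probability
distribution) that preserves its input to its output (the marginal of `K.f d`
on the domain is the point mass at `d`). -/
def InMD {Val Var : Type} (K : PKernel Val Var) : Prop :=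
  K.dom ⊆ K.ran ∧ (∀ d, IsDist (K.f d)) ∧ (∀ d, marg (K.f d) K.dom = dirac d)

/-- Definedness condition for parallel composition. -/
def OplusDef {Val Var : Type} (K1 K2 : PKernel Val Var) : Prop :=
  K1.ran ∩ K2.ran = K1.dom ∩ K2.dom

/-- Parallel composition of kernels. -/
noncomputable def poplus {Val Var : Type} (K1 K2 : PKernel Val Var) : PKernel Val Var where
  dom := K1.dom ∪ K2.dom
  ran := K1.ran ∪ K2.ran
  f := fun d m =>
    K1.f (restr Set.subset_union_left d) (restr Set.subset_union_left m) *
    K2.f (restr Set.subset_union_right d) (restr Set.subset_union_right m)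

open Classical in
/-- Sequential (Kleisli) composition of kernels, defined when
`K1.ran = K2.dom` (and returning the zero kernel otherwise). -/
noncomputable def podot {Val Var : Type} (K1 K2 : PKernel Val Var) : PKernel Val Var where
  dom := K1.dom
  ran := K2.ran
  f := fun d m =>
    if h : K1.ran = K2.dom then
      ∑' m' : Mem Val Var K1.ran, K1.f d m' * K2.f (restr (le_of_eq h.symm) m') m
    else 0

open Classical in
/-- The identity (unit) kernel on memories over `R`. -/
noncomputable def unitK (Val Var : Type) (R : Set Var) : PKernel Val Var where
  dom := R
  ran := R
  f := fun d => dirac d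

/-- The preorder on kernels: `f ⊑ g` iff `g = (f ⊕ unit_R) ⊙ h` for some set of
variables `R` and some `h ∈ M^D` (with both compositions defined). -/
def ple {Val Var : Type} (K1 K2 : PKernel Val Var) : Prop :=
  ∃ (R : Set Var) (h : PKernel Val Var), InMD h ∧
    OplusDef K1 (unitK Val Var R) ∧
    (poplus K1 (unitK Val Var R)).ran = h.dom ∧
    K2 = podot (poplus K1 (unitK Val Var R)) h

/-- Marginalization of a kernel to a smaller range. -/
noncomputable def margK {Val Var : Type} (K : PKernel Val Var) (T : Set Var) :
    PKernel Val Var where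
  dom := K.dom
  ran := T
  f := fun d => marg (K.f d) T

/-!
(i) The marginal of `f1 ⊙ f2` on `range f1` sums `f1 d r` against the marginals of the `f2 r`,
which are the point masses at `r` because `f2` preserves its input.

(ii) Take for `g r` the distribution `f (r^D)` conditioned on the event that its restriction to
`range f1` is `r`. Where this event is null, any distribution extending `r` will do, since it is
weighted by `f1 (r^D) r = 0`; and `f = f1 ⊙ g` is the law of total probability.
-/

section Memories

open Classical

variable {Val Var : Type} {S T : Set Var}

lemma agree_iff_restr_eq (h : T ⊆ S) (m : Mem Val Var S) (r : Mem Val Var T) :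
    Agree m r ↔ restr h m = r :=
  ⟨fun ha => funext fun t => ha t.1 (h t.2) t.2, fun he i h1 h2 => by rw [← he]; rfl⟩

lemma marg_apply_eq_tsum_restr (h : T ⊆ S) (μ : Mem Val Var S → ℝ≥0∞) (r : Mem Val Var T) :
    marg μ T r = ∑' m, if restr h m = r then μ m else 0 := by
  simp only [marg, agree_iff_restr_eq h]

lemma le_marg_restr (h : T ⊆ S) (μ : Mem Val Var S → ℝ≥0∞) (m : Mem Val Var S) :
    μ m ≤ marg μ T (restr h m) := by
  rw [marg_apply_eq_tsum_restr h]
  exact le_of_eq_of_le (if_pos rfl).symm (ENNReal.le_tsum m)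

lemma restr_eq_of_marg_eq_dirac (h : T ⊆ S) {μ : Mem Val Var S → ℝ≥0∞} {t : Mem Val Var T}
    (hμ : marg μ T = dirac t) {m : Mem Val Var S} (hm : μ m ≠ 0) : restr h m = t := by
  by_contra hne
  have hzero : marg μ T (restr h m) = 0 := by rw [hμ, dirac, if_neg hne]
  exact hm (le_zero_iff.mp (hzero ▸ le_marg_restr h μ m))

lemma marg_ne_top {μ : Mem Val Var S → ℝ≥0∞} (hμ : IsDist μ) (r : Mem Val Var T) :
    marg μ T r ≠ ⊤ := by
  refine ne_top_of_le_ne_top ENNReal.one_ne_top ?_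
  rw [← hμ]
  exact ENNReal.tsum_le_tsum fun m => by split_ifs <;> simp

lemma IsDist.nonempty {α : Type*} {μ : α → ℝ≥0∞} (hμ : IsDist μ) : Nonempty α := by
  by_contra hα
  rw [not_nonempty_iff] at hα
  simp [IsDist] at hμ

lemma isDist_dirac (e : Mem Val Var S) : IsDist (dirac e) := tsum_ite_eq e 1

lemma exists_rightInverse_restr (h : T ⊆ S) (hS : Mem Val Var T → Nonempty (Mem Val Var S)) :
    ∃ ext : Mem Val Var T → Mem Val Var S, ∀ r, restr h (ext r) = r :=
  ⟨fun r i => if hi : i.1 ∈ T then r ⟨i.1, hi⟩ else (hS r).some i,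
    fun _ => funext fun t => dif_pos t.2⟩

lemma marg_dirac (h : T ⊆ S) (e : Mem Val Var S) : marg (dirac e) T = dirac (restr h e) := by
  funext r
  rw [marg_apply_eq_tsum_restr h, tsum_eq_single e fun m hm => by simp [dirac, hm]]
  simp [dirac, eq_comm]

lemma marg_bind_of_marg_eq_dirac (μ : Mem Val Var T → ℝ≥0∞)
    {K : Mem Val Var T → Mem Val Var S → ℝ≥0∞} (hK : ∀ t, marg (K t) T = dirac t) :
    marg (fun m => ∑' t, μ t * K t m) T = μ := by
  funext r
  calc marg (fun m => ∑' t, μ t * K t m) T r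
      = ∑' m, ∑' t, μ t * (if Agree m r then K t m else 0) := by
        refine tsum_congr fun m => ?_
        split_ifs <;> simp
    _ = ∑' t, μ t * marg (K t) T r := by
        rw [ENNReal.tsum_comm]
        simp only [ENNReal.tsum_mul_left, marg]
    _ = μ r := by simp [hK, dirac]

end Memories

section Conditioning

open Classical

variable {Val Var : Type} {S T : Set Var}

/-- `μ` conditioned on the event that its restriction to `T` is `r`; the distribution `ν` is
used instead when that event has mass zero. -/
noncomputable def condOn (h : T ⊆ S) (μ : Mem Val Var S → ℝ≥0∞) (r : Mem Val Var T)
    (ν : Mem Val Var S → ℝ≥0∞) : Mem Val Var S → ℝ≥0∞ :=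
  if marg μ T r = 0 then ν else fun m => if restr h m = r then μ m / marg μ T r else 0

lemma condOn_of_marg_ne_zero (h : T ⊆ S) {μ : Mem Val Var S → ℝ≥0∞} {r : Mem Val Var T}
    (ν : Mem Val Var S → ℝ≥0∞) (hr : marg μ T r ≠ 0) (m : Mem Val Var S) :
    condOn h μ r ν m = if restr h m = r then μ m / marg μ T r else 0 := by
  simp only [condOn, if_neg hr]

lemma tsum_ite_restr_eq_div (h : T ⊆ S) (μ : Mem Val Var S → ℝ≥0∞) (r : Mem Val Var T) (c : ℝ≥0∞) :
    ∑' m, (if restr h m = r then μ m / c else 0) = marg μ T r / c := by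
  rw [marg_apply_eq_tsum_restr h, ENNReal.div_eq_inv_mul, ← ENNReal.tsum_mul_left]
  exact tsum_congr fun m => by split_ifs <;> simp [ENNReal.div_eq_inv_mul]

lemma marg_condOn_of_marg_ne_zero (h : T ⊆ S) {μ : Mem Val Var S → ℝ≥0∞} {r : Mem Val Var T}
    (ν : Mem Val Var S → ℝ≥0∞) (hr : marg μ T r ≠ 0) (hr' : marg μ T r ≠ ⊤)
    (r' : Mem Val Var T) : marg (condOn h μ r ν) T r' = if r' = r then 1 else 0 := by
  rw [marg_apply_eq_tsum_restr h]
  simp only [condOn_of_marg_ne_zero h ν hr, ← ite_and]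
  split_ifs with hrr
  · subst hrr
    simp only [and_self, tsum_ite_restr_eq_div]
    exact ENNReal.div_self hr hr'
  · exact ENNReal.tsum_eq_zero.mpr fun m => if_neg fun hm => hrr (hm.1.symm.trans hm.2)

lemma isDist_condOn (h : T ⊆ S) {μ : Mem Val Var S → ℝ≥0∞} (r : Mem Val Var T)
    {ν : Mem Val Var S → ℝ≥0∞} (hν : IsDist ν) (hr : marg μ T r ≠ ⊤) :
    IsDist (condOn h μ r ν) := by
  by_cases hr0 : marg μ T r = 0
  · simpa only [condOn, if_pos hr0] using hν
  · simp only [IsDist, condOn_of_marg_ne_zero h ν hr0, tsum_ite_restr_eq_div]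
    exact ENNReal.div_self hr0 hr

lemma marg_condOn (h : T ⊆ S) {μ : Mem Val Var S → ℝ≥0∞} (r : Mem Val Var T)
    {ν : Mem Val Var S → ℝ≥0∞} (hν : marg ν T = dirac r) (hr : marg μ T r ≠ ⊤) :
    marg (condOn h μ r ν) T = dirac r := by
  by_cases hr0 : marg μ T r = 0
  · simpa only [condOn, if_pos hr0] using hν
  · exact funext (marg_condOn_of_marg_ne_zero h ν hr0 hr)

lemma tsum_marg_mul_condOn (h : T ⊆ S) {μ : Mem Val Var S → ℝ≥0∞}
    (hμ : ∀ r, marg μ T r ≠ ⊤) (ν : Mem Val Var T → Mem Val Var S → ℝ≥0∞) (m : Mem Val Var S) :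
    ∑' r, marg μ T r * condOn h μ r (ν r) m = μ m := by
  rw [tsum_eq_single (restr h m)]
  · by_cases hr0 : marg μ T (restr h m) = 0
    · rw [hr0, zero_mul]
      exact (le_zero_iff.mp (hr0 ▸ le_marg_restr h μ m)).symm
    · rw [condOn_of_marg_ne_zero h _ hr0, if_pos rfl, ENNReal.mul_div_cancel hr0 (hμ _)]
  · intro r hr
    by_cases hr0 : marg μ T r = 0
    · rw [hr0, zero_mul]
    · rw [condOn_of_marg_ne_zero h _ hr0, if_neg (Ne.symm hr), mul_zero]

end Conditioning

section Kernels

variable {Val Var : Type} {D R₁ R : Set Var}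

lemma podot_mk (F₁ : Mem Val Var D → Mem Val Var R₁ → ℝ≥0∞)
    (F₂ : Mem Val Var R₁ → Mem Val Var R → ℝ≥0∞) :
    podot ⟨D, R₁, F₁⟩ ⟨R₁, R, F₂⟩ = ⟨D, R, fun d m => ∑' r, F₁ d r * F₂ r m⟩ :=
  congrArg (PKernel.mk D R) (funext₂ fun _ _ => dif_pos rfl)

noncomputable def condKernel (hD : D ⊆ R₁) (h : R₁ ⊆ R) (F : Mem Val Var D → Mem Val Var R → ℝ≥0∞)
    (ext : Mem Val Var R₁ → Mem Val Var R) : Mem Val Var R₁ → Mem Val Var R → ℝ≥0∞ :=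
  fun r => condOn h (F (restr hD r)) r (dirac (ext r))

lemma inMD_condKernel (hD : D ⊆ R₁) (h : R₁ ⊆ R) {F : Mem Val Var D → Mem Val Var R → ℝ≥0∞}
    (hF : ∀ d, IsDist (F d)) {ext : Mem Val Var R₁ → Mem Val Var R}
    (hext : ∀ r, restr h (ext r) = r) : InMD ⟨R₁, R, condKernel hD h F ext⟩ :=
  ⟨h, fun r => isDist_condOn h r (isDist_dirac _) (marg_ne_top (hF _) r),
    fun r => marg_condOn h r (by rw [marg_dirac h, hext]) (marg_ne_top (hF _) r)⟩

lemma tsum_marg_mul_condKernel (hD : D ⊆ R₁) (h : R₁ ⊆ R)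
    {F : Mem Val Var D → Mem Val Var R → ℝ≥0∞} (hF : ∀ d, IsDist (F d))
    (hpres : ∀ d, marg (marg (F d) R₁) D = dirac d) (ext : Mem Val Var R₁ → Mem Val Var R)
    (d : Mem Val Var D) (m : Mem Val Var R) :
    ∑' r, marg (F d) R₁ r * condKernel hD h F ext r m = F d m := by
  calc ∑' r, marg (F d) R₁ r * condKernel hD h F ext r m
      = ∑' r, marg (F d) R₁ r * condOn h (F d) r (dirac (ext r)) m := by
        refine tsum_congr fun r => ?_
        by_cases hr0 : marg (F d) R₁ r = 0
        · rw [hr0, zero_mul, zero_mul]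
        · rw [condKernel, restr_eq_of_marg_eq_dirac hD (hpres d) hr0]
    _ = F d m := tsum_marg_mul_condOn h (marg_ne_top (hF d)) _ m

end Kernels

theorem MD_disintegration_general {Val Var : Type} :
    (∀ f f1 f2 : PKernel Val Var, InMD f → InMD f1 → InMD f2 →
        f1.ran = f2.dom → f = podot f1 f2 → margK f f1.ran = f1) ∧
    (∀ f f1 : PKernel Val Var, InMD f → InMD f1 →
        f1.dom = f.dom → f1.ran ⊆ f.ran → margK f f1.ran = f1 →
        ∃ g : PKernel Val Var, InMD g ∧ g.dom = f1.ran ∧ g.ran = f.ran ∧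
          f = podot f1 g) := by
  constructor
  · rintro f ⟨D₁, R₁, F₁⟩ ⟨D₂, R₂, F₂⟩ - - ⟨-, -, hpres₂⟩ (rfl : R₁ = D₂) rfl
    rw [podot_mk]
    exact congrArg (PKernel.mk D₁ R₁) (funext fun d => marg_bind_of_marg_eq_dirac (F₁ d) hpres₂)
  · rintro ⟨D, R, F⟩ ⟨D₁, R₁, F₁⟩ ⟨-, hF, -⟩ ⟨hD₁, -, hpres₁⟩ (rfl : D₁ = D) (hR₁ : R₁ ⊆ R) hmarg
    injection hmarg with _ _ hF₁
    obtain rfl : (fun d => marg (F d) R₁) = F₁ := hF₁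
    obtain ⟨ext, hext⟩ := exists_rightInverse_restr hR₁ fun r => (hF (restr hD₁ r)).nonempty
    refine ⟨⟨R₁, R, condKernel hD₁ hR₁ F ext⟩, inMD_condKernel hD₁ hR₁ hF hext, rfl, rfl, ?_⟩
    rw [podot_mk]
    exact congrArg (PKernel.mk D₁ R)
      (funext₂ fun d m => (tsum_marg_mul_condKernel hD₁ hR₁ hF hpres₁ ext d m).symm)

/-- **Disintegration for Markov kernels.**
(i) If `f1, f2 ∈ M^D`, `f1 ⊙ f2` is defined (`range(f1) = dom(f2)`) and
`f = f1 ⊙ f2`, then `π_{range(f1)} f = f1`.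
(ii) Conversely, if `f, f1 ∈ M^D` with `dom(f1) = dom(f)`, `range(f1) ⊆ range(f)`
and `π_{range(f1)} f = f1`, then there is `g ∈ M^D` with
`g : Mem(range(f1)) → D(Mem(range(f)))` and `f = f1 ⊙ g`. -/
theorem MD_disintegration {Val Var : Type} [Fintype Val] [Fintype Var] :
    (∀ f f1 f2 : PKernel Val Var, InMD f → InMD f1 → InMD f2 →
        f1.ran = f2.dom → f = podot f1 f2 → margK f f1.ran = f1) ∧
    (∀ f f1 : PKernel Val Var, InMD f → InMD f1 →
        f1.dom = f.dom → f1.ran ⊆ f.ran → margK f f1.ran = f1 →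
        ∃ g : PKernel Val Var, InMD g ∧ g.dom = f1.ran ∧ g.ran = f.ran ∧
          f = podot f1 g) :=
  MD_disintegration_general
end

section
/- If X and Y are independent conditioned on S in a finitely supported distribution μ on Mem(Var), then the values on X ∩ Y are determined by the values on S: for every m ∈ Mem(X ∩ Y) and s ∈ Mem(S) such that m ⊗ s is defined and μ(X ∩ Y = m, S = s) ≠ 0, one has μ(X ∩ Y = m | S = s) = 1. -/
open scoped ENNReal

open Classical in
/-- `prS μ S s` is `μ(S = s)`: the total probability of memories whose restriction
to `S` is `s`. -/
noncomputable def prS {Val Var : Type} (μ : Mem Val Var (Set.univ : Set Var) → ℝ≥0∞)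
    (S : Set Var) (s : Mem Val Var S) : ℝ≥0∞ :=
  ∑' m : Mem Val Var (Set.univ : Set Var), if Agree m s then μ m else 0

open Classical in
/-- `prS2 μ X x Z z` is the joint probability `μ(X = x, Z = z)`. -/
noncomputable def prS2 {Val Var : Type} (μ : Mem Val Var (Set.univ : Set Var) → ℝ≥0∞)
    (X : Set Var) (x : Mem Val Var X) (Z : Set Var) (z : Mem Val Var Z) : ℝ≥0∞ :=
  ∑' m : Mem Val Var (Set.univ : Set Var), if Agree m x ∧ Agree m z then μ m else 0

open Classical in
/-- `prS3 μ X x Y y Z z` is the joint probability `μ(X = x, Y = y, Z = z)`. -/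
noncomputable def prS3 {Val Var : Type} (μ : Mem Val Var (Set.univ : Set Var) → ℝ≥0∞)
    (X : Set Var) (x : Mem Val Var X) (Y : Set Var) (y : Mem Val Var Y)
    (Z : Set Var) (z : Mem Val Var Z) : ℝ≥0∞ :=
  ∑' m : Mem Val Var (Set.univ : Set Var),
    if Agree m x ∧ Agree m y ∧ Agree m z then μ m else 0

/-- `X` and `Y` are independent conditioned on `Z` in `μ`:
`μ(X = x | Z = z) · μ(Y = y | Z = z) = μ(X = x, Y = y | Z = z)` for all `x, y, z`
with `μ(Z = z) ≠ 0`. -/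
def CondIndep {Val Var : Type} (μ : Mem Val Var (Set.univ : Set Var) → ℝ≥0∞)
    (X Y Z : Set Var) : Prop :=
  ∀ (x : Mem Val Var X) (y : Mem Val Var Y) (z : Mem Val Var Z),
    prS μ Z z ≠ 0 →
    (prS2 μ X x Z z / prS μ Z z) * (prS2 μ Y y Z z / prS μ Z z) =
      prS3 μ X x Y y Z z / prS μ Z z

/-!
Pick a memory `n₀` of positive mass that restricts to `m` and `s`. For any memory `n` of
positive mass restricting to `s`, the events `X = n₀^X` and `Y = n^Y` both have positive
probability given `S = s`, so by conditional independence so does their conjunction: some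
memory agrees with `n₀` on `X` and with `n` on `Y`. Hence `n` and `n₀` agree on `X ∩ Y`, i.e.
`n` restricts to `m`, and the events `S = s` and `X ∩ Y = m, S = s` have the same probability.
-/

section Memories

variable {Val Var : Type} {μ : Mem Val Var (Set.univ : Set Var) → ℝ≥0∞}

theorem agree_restr_univ (T : Set Var) (n : Mem Val Var (Set.univ : Set Var)) :
    Agree n (restr (Set.subset_univ T) n) :=
  fun _ _ _ => rfl

theorem prS2_le_prS (X : Set Var) (x : Mem Val Var X) (Z : Set Var) (z : Mem Val Var Z) :
    prS2 μ X x Z z ≤ prS μ Z z := by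
  classical
  exact ENNReal.tsum_le_tsum fun n => by split_ifs <;> simp_all

theorem prS_le_tsum (Z : Set Var) (z : Mem Val Var Z) : prS μ Z z ≤ ∑' n, μ n := by
  classical
  exact ENNReal.tsum_le_tsum fun n => by split_ifs <;> simp

theorem prS_ne_top (hμ : IsDist μ) (Z : Set Var) (z : Mem Val Var Z) : prS μ Z z ≠ ⊤ :=
  ne_top_of_le_ne_top (hμ ▸ ENNReal.one_ne_top) (prS_le_tsum Z z)

theorem prS2_ne_zero_iff {X Z : Set Var} {x : Mem Val Var X} {z : Mem Val Var Z} :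
    prS2 μ X x Z z ≠ 0 ↔ ∃ n, Agree n x ∧ Agree n z ∧ μ n ≠ 0 := by
  simp [prS2, ENNReal.tsum_eq_zero]

theorem prS3_ne_zero_iff {X Y Z : Set Var} {x : Mem Val Var X} {y : Mem Val Var Y}
    {z : Mem Val Var Z} :
    prS3 μ X x Y y Z z ≠ 0 ↔ ∃ n, Agree n x ∧ Agree n y ∧ Agree n z ∧ μ n ≠ 0 := by
  simp [prS3, ENNReal.tsum_eq_zero]

theorem prS2_eq_prS_of_agree {X Z : Set Var} {x : Mem Val Var X} {z : Mem Val Var Z}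
    (h : ∀ n, μ n ≠ 0 → Agree n z → Agree n x) :
    prS2 μ X x Z z = prS μ Z z := by
  classical
  refine tsum_congr fun n => ?_
  by_cases hn : μ n = 0
  · simp [hn]
  · exact if_congr (and_iff_right_of_imp (h n hn)) rfl rfl

theorem CondIndep.prS3_ne_zero {X Y Z : Set Var} (hCI : CondIndep μ X Y Z)
    {x : Mem Val Var X} {y : Mem Val Var Y} {z : Mem Val Var Z} (hZ : prS μ Z z ≠ ⊤)
    (hx : prS2 μ X x Z z ≠ 0) (hy : prS2 μ Y y Z z ≠ 0) :
    prS3 μ X x Y y Z z ≠ 0 := by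
  have hZ₀ : prS μ Z z ≠ 0 := ne_bot_of_le_ne_bot hx (prS2_le_prS X x Z z)
  have hprod : prS3 μ X x Y y Z z / prS μ Z z ≠ 0 := by
    rw [← hCI x y z hZ₀]
    exact mul_ne_zero (ENNReal.div_pos hx hZ).ne' (ENNReal.div_pos hy hZ).ne'
  exact fun h => hprod (by rw [h, ENNReal.zero_div])

theorem CondIndep.eq_on_inter {X Y Z : Set Var} (hCI : CondIndep μ X Y Z) (hμ : IsDist μ)
    {z : Mem Val Var Z} {n₀ n : Mem Val Var (Set.univ : Set Var)}
    (hn₀ : μ n₀ ≠ 0) (hn₀z : Agree n₀ z) (hn : μ n ≠ 0) (hnz : Agree n z)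
    {i : Var} (hi : i ∈ X ∩ Y) :
    n₀ ⟨i, Set.mem_univ i⟩ = n ⟨i, Set.mem_univ i⟩ := by
  have hx : prS2 μ X (restr (Set.subset_univ X) n₀) Z z ≠ 0 :=
    prS2_ne_zero_iff.2 ⟨n₀, agree_restr_univ X n₀, hn₀z, hn₀⟩
  have hy : prS2 μ Y (restr (Set.subset_univ Y) n) Z z ≠ 0 :=
    prS2_ne_zero_iff.2 ⟨n, agree_restr_univ Y n, hnz, hn⟩
  obtain ⟨n', hn'x, hn'y, -⟩ := prS3_ne_zero_iff.1 (hCI.prS3_ne_zero (prS_ne_top hμ Z z) hx hy)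
  exact (hn'x i (Set.mem_univ i) hi.1).symm.trans (hn'y i (Set.mem_univ i) hi.2)

end Memories

theorem ci_determines_overlap_general {Val Var : Type}
    (μ : Mem Val Var (Set.univ : Set Var) → ℝ≥0∞) (hμ : IsDist μ)
    (X Y S : Set Var) (hCI : CondIndep μ X Y S)
    (m : Mem Val Var (X ∩ Y : Set Var)) (s : Mem Val Var S)
    (hne : prS2 μ (X ∩ Y) m S s ≠ 0) :
    prS2 μ (X ∩ Y) m S s / prS μ S s = 1 := by
  obtain ⟨n₀, hn₀m, hn₀s, hn₀⟩ := prS2_ne_zero_iff.1 hne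
  have hS : prS μ S s ≠ 0 := ne_bot_of_le_ne_bot hne (prS2_le_prS _ m S s)
  rw [prS2_eq_prS_of_agree fun n hn hns i _ hi =>
    (hCI.eq_on_inter hμ hn₀ hn₀s hn hns hi).symm.trans (hn₀m i (Set.mem_univ i) hi)]
  exact ENNReal.div_self hS (prS_ne_top hμ S s)

/-- **Conditional independence determines the overlap.** If `X` and `Y` are
independent conditioned on `S` in a distribution `μ` on memories over `Var`, then
the values on `X ∩ Y` are determined by the values on `S`: for every memory `m`
over `X ∩ Y` and `s` over `S` with joint probability `μ(X ∩ Y = m, S = s) ≠ 0`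
(in particular `m ⊗ s` is defined), the conditional probability
`μ(X ∩ Y = m | S = s)` equals `1`. -/
theorem ci_determines_overlap {Val Var : Type} [Fintype Val] [Fintype Var]
    (μ : Mem Val Var (Set.univ : Set Var) → ℝ≥0∞) (hμ : IsDist μ)
    (X Y S : Set Var) (hCI : CondIndep μ X Y S)
    (m : Mem Val Var (X ∩ Y : Set Var)) (s : Mem Val Var S)
    (hne : prS2 μ (X ∩ Y) m S s ≠ 0) :
    prS2 μ (X ∩ Y) m S s / prS μ S s = 1 :=
  ci_determines_overlap_general μ hμ X Y S hCI m s hne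
end
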